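/- Let X be a real-valued random variable with a density g ∈ L^1(ℝ) admitting the representation g(x) = E[1_{X>x} H] for an integrable random variable H. Then ‖g‖_{L^1} ≤ E[|X|·|H|]. -/

import Mathlib

/-!
Write `s = {X > x}`, so that `g x = ∫_s H`. Since `E[H] = 0`, also `g x = -∫_{sᶜ} H`; hence
`|g x| ≤ ∫_s |H|` for `x ≥ 0` and `|g x| ≤ ∫_{sᶜ} |H|` for `x < 0`. In both cases the event
integrated over is `{x ∈ [min 0 X, max 0 X)}`, so by Tonelli
`∫ |g| ≤ E[|H| · λ[min 0 X, max 0 X)] = E[|X| |H|]`.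
-/

open MeasureTheory Set ENNReal

namespace Set

variable {α : Type*} [LinearOrder α] {a b x : α}

def uIco (a b : α) : Set α := Ico (min a b) (max a b)

lemma mem_uIco_of_le (hx : a ≤ x) : x ∈ uIco a b ↔ x < b := by
  simp [uIco, hx, not_lt.mpr hx]

lemma mem_uIco_of_lt (hx : x < a) : x ∈ uIco a b ↔ b ≤ x := by
  simp [uIco, hx, not_le.mpr hx]

end Set

lemma Real.volume_uIco (a b : ℝ) : volume (uIco a b) = ENNReal.ofReal |b - a| := by
  rw [uIco, Real.volume_Ico, max_sub_min_eq_abs]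

section
variable {Ω : Type*} [MeasurableSpace Ω] {μ : Measure Ω}

lemma measurableSet_setOf_mem_uIco_zero {X : Ω → ℝ} (hX : Measurable X) (x : ℝ) :
    MeasurableSet {ω | x ∈ uIco 0 (X ω)} := by
  rcases le_or_gt 0 x with hx | hx
  · simp only [mem_uIco_of_le hx]; exact measurableSet_lt measurable_const hX
  · simp only [mem_uIco_of_lt hx]; exact measurableSet_le hX measurable_const

lemma enorm_setIntegral_le_lintegral_compl {H : Ω → ℝ} (hH : Integrable H μ)
    (hH0 : ∫ ω, H ω ∂μ = 0) {s : Set Ω} (hs : MeasurableSet s) :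
    ‖∫ ω in s, H ω ∂μ‖ₑ ≤ ∫⁻ ω in sᶜ, ‖H ω‖ₑ ∂μ := by
  have : ∫ ω in sᶜ, H ω ∂μ = -∫ ω in s, H ω ∂μ := by
    rw [setIntegral_compl hs hH, hH0, zero_sub]
  rw [← enorm_neg, ← this]
  exact enorm_integral_le_lintegral_enorm _

lemma lintegral_setLIntegral_mem_uIco_zero [SFinite μ] {X : Ω → ℝ} {h : Ω → ℝ≥0∞}
    (hX : Measurable X) (hh : Measurable h) :
    ∫⁻ x, ∫⁻ ω in {ω | x ∈ uIco 0 (X ω)}, h ω ∂μ = ∫⁻ ω, ‖X ω‖ₑ * h ω ∂μ := by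
  have hmeas : MeasurableSet {p : ℝ × Ω | p.1 ∈ uIco 0 (X p.2)} := by
    simp only [uIco, mem_Ico]
    have hX' : Measurable fun p : ℝ × Ω => X p.2 := hX.comp measurable_snd
    exact (measurableSet_le (measurable_const.min hX') measurable_fst).inter
      (measurableSet_lt measurable_fst (measurable_const.max hX'))
  calc ∫⁻ x, ∫⁻ ω in {ω | x ∈ uIco 0 (X ω)}, h ω ∂μ
      = ∫⁻ x, ∫⁻ ω, (uIco 0 (X ω)).indicator (fun _ => h ω) x ∂μ := by
        refine lintegral_congr fun x => ?_
        rw [← lintegral_indicator (measurableSet_setOf_mem_uIco_zero hX x)]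
        rfl
    _ = ∫⁻ ω, (∫⁻ x, (uIco 0 (X ω)).indicator (fun _ => h ω) x) ∂μ :=
        lintegral_lintegral_swap ((hh.comp measurable_snd).indicator hmeas).aemeasurable
    _ = ∫⁻ ω, ‖X ω‖ₑ * h ω ∂μ := by
        refine lintegral_congr fun ω => ?_
        rw [lintegral_indicator_const (s := uIco 0 (X ω)) measurableSet_Ico, Real.volume_uIco,
          sub_zero, Real.enorm_eq_ofReal_abs, mul_comm]

lemma enorm_setIntegral_preimage_Ioi_le {X H : Ω → ℝ} (hX : Measurable X) (hH : Integrable H μ)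
    (hH0 : ∫ ω, H ω ∂μ = 0) (x : ℝ) :
    ‖∫ ω in X ⁻¹' Ioi x, H ω ∂μ‖ₑ ≤ ∫⁻ ω in {ω | x ∈ uIco 0 (X ω)}, ‖H ω‖ₑ ∂μ := by
  rcases le_or_gt 0 x with hx | hx
  · have : {ω | x ∈ uIco 0 (X ω)} = X ⁻¹' Ioi x := by ext; simp [mem_uIco_of_le hx]
    rw [this]
    exact enorm_integral_le_lintegral_enorm _
  · have : {ω | x ∈ uIco 0 (X ω)} = (X ⁻¹' Ioi x)ᶜ := by ext; simp [mem_uIco_of_lt hx]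
    rw [this]
    exact enorm_setIntegral_le_lintegral_compl hH hH0 (hX measurableSet_Ioi)

lemma lintegral_enorm_le_of_eq_setIntegral_preimage_Ioi [SFinite μ] {X H : Ω → ℝ} {g : ℝ → ℝ}
    (hX : Measurable X) (hH : Measurable H) (hHint : Integrable H μ) (hH0 : ∫ ω, H ω ∂μ = 0)
    (hg : ∀ x, g x = ∫ ω in X ⁻¹' Ioi x, H ω ∂μ) :
    ∫⁻ x, ‖g x‖ₑ ≤ ∫⁻ ω, ‖X ω‖ₑ * ‖H ω‖ₑ ∂μ :=
  calc ∫⁻ x, ‖g x‖ₑ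
      ≤ ∫⁻ x, ∫⁻ ω in {ω | x ∈ uIco 0 (X ω)}, ‖H ω‖ₑ ∂μ := lintegral_mono fun x => by
        rw [hg x]; exact enorm_setIntegral_preimage_Ioi_le hX hHint hH0 x
    _ = ∫⁻ ω, ‖X ω‖ₑ * ‖H ω‖ₑ ∂μ := lintegral_setLIntegral_mem_uIco_zero hX hH.enorm

end

theorem density_L1_bound_from_representation_general
    (Ω : Type) [MeasureSpace Ω] [IsProbabilityMeasure (volume : Measure Ω)]
    (X H : Ω → ℝ) (hX : Measurable X) (hH : Measurable H)
    (hHint : Integrable H)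
    (hXH : Integrable (fun ω => |X ω| * |H ω|))
    (g : ℝ → ℝ) (hg : Integrable g)
    (hrep : ∀ x : ℝ, g x = ∫ ω, if x < X ω then H ω else 0)
    (hH0 : (∫ ω, H ω) = 0) :
    (∫ x, |g x|) ≤ ∫ ω, |X ω| * |H ω| := by
  have hg_set : ∀ x, g x = ∫ ω in X ⁻¹' Ioi x, H ω := fun x => by
    rw [hrep x, ← integral_indicator (hX measurableSet_Ioi)]
    rfl
  rw [← ENNReal.ofReal_le_ofReal_iff (integral_nonneg fun ω => by positivity)]
  calc ENNReal.ofReal (∫ x, |g x|) = ∫⁻ x, ‖g x‖ₑ := ofReal_integral_norm_eq_lintegral_enorm hg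
    _ ≤ ∫⁻ ω, ‖X ω‖ₑ * ‖H ω‖ₑ :=
      lintegral_enorm_le_of_eq_setIntegral_preimage_Ioi hX hH hHint hH0 hg_set
    _ = ENNReal.ofReal (∫ ω, |X ω| * |H ω|) := by
      rw [ofReal_integral_eq_lintegral_ofReal hXH (.of_forall fun ω => by positivity)]
      simp only [ENNReal.ofReal_mul (abs_nonneg _), Real.enorm_eq_ofReal_abs]

/-- If a real random variable `X` has density `g` with the Malliavin-type
representation `g(x) = E[1_{X>x} H]` where `E[H] = 0`, then
`‖g‖_{L¹} ≤ E[|X||H|]`. -/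
theorem density_L1_bound_from_representation
    (Ω : Type) [MeasureSpace Ω] [IsProbabilityMeasure (volume : Measure Ω)]
    (X H : Ω → ℝ) (hX : Measurable X) (hH : Measurable H)
    (hHint : Integrable H)
    (hXH : Integrable (fun ω => |X ω| * |H ω|))
    (g : ℝ → ℝ) (hg : Integrable g)
    (hdensity : Measure.map X volume
      = (volume : Measure ℝ).withDensity (fun x => ENNReal.ofReal (g x)))
    (hrep : ∀ x : ℝ, g x = ∫ ω, if x < X ω then H ω else 0)
    (hH0 : (∫ ω, H ω) = 0) :
    (∫ x, |g x|) ≤ ∫ ω, |X ω| * |H ω| :=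
  density_L1_bound_from_representation_general Ω X H hX hH hHint hXH g hg hrep hH0
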